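/- Let X ∈ M₂(ℂ) and suppose the characteristic polynomial of X·X̄ factors as (t−λ)(t−μ) with λ, μ real numbers satisfying λ ≤ 0 and μ ≤ 0. Then λ = μ. -/

import Mathlib

open scoped ComplexOrder

noncomputable section

/-- The underlying real vector space of the Lie algebra `g` (coordinates w.r.t. `E₁,…,E₆`). -/
abbrev GV : Type := Fin 6 → ℝ

/-- The basis vectors `E₁,…,E₆` (indexed by `0,…,5`). -/
def E (i : Fin 6) : GV := Pi.single i 1

/-- The Lie bracket of `g`: the only nonzero brackets of basis vectors are
`[E₁,E₃] = -E₅`, `[E₂,E₄] = E₅`, `[E₁,E₄] = -E₆`, `[E₂,E₃] = -E₆`. -/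
def br (X Y : GV) : GV :=
  ![0, 0, 0, 0,
    -(X 0 * Y 2 - X 2 * Y 0) + (X 1 * Y 3 - X 3 * Y 1),
    -(X 0 * Y 3 - X 3 * Y 0) - (X 1 * Y 2 - X 2 * Y 1)]

/-- `J` is a complex structure: `J ∘ J = -id`. -/
def IsCpxStr (J : Module.End ℝ GV) : Prop := ∀ x, J (J x) = -x

/-- Integrability (Newlander–Nirenberg) condition. -/
def Integrable (J : Module.End ℝ GV) : Prop :=
  ∀ X Y, br (J X) (J Y) = br X Y + J (br (J X) Y) + J (br X (J Y))

/-- `J` induces the standard orientation of `g`. -/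
def PosOrient (J : Module.End ℝ GV) : Prop :=
  ∃ v₁ v₂ v₃ : GV,
    0 < (Matrix.of fun i j => ![v₁, J v₁, v₂, J v₂, v₃, J v₃] i j).det

/-- `C⁺(g)`: integrable complex structures inducing the standard orientation. -/
def Cplus : Set (Module.End ℝ GV) := {J | IsCpxStr J ∧ Integrable J ∧ PosOrient J}

/-- The inner product making `E₁,…,E₆` orthonormal. -/
def inner6 (x y : GV) : ℝ := ∑ i, x i * y i

def IsOrthog (J : Module.End ℝ GV) : Prop := ∀ x y, inner6 (J x) (J y) = inner6 x y

/-- `C⁺(g,g)`: orthogonal members of `C⁺(g)`. -/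
def Cgg : Set (Module.End ℝ GV) := {J | J ∈ Cplus ∧ IsOrthog J}

lemma le46 : (4:ℕ) ≤ 6 := by norm_num

/-- Determinant of `(w̄₁, Ĵw̄₁, w̄₂, Ĵw̄₂)` w.r.t. the basis `(Ē₁,…,Ē₄)` of `g/[g,g]`
(the coordinates of the class of `v` are the first four coordinates of `v`). -/
def hatDet (J : Module.End ℝ GV) (w₁ w₂ : GV) : ℝ :=
  (Matrix.of fun (i : Fin 4) (j : Fin 4) =>
    ![w₁, J w₁, w₂, J w₂] i (Fin.castLE le46 j)).det

/-- `C₊`: members of `C⁺(g)` whose induced structure on `g/[g,g]` is positively oriented. -/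
def CplusP : Set (Module.End ℝ GV) :=
  {J | J ∈ Cplus ∧ ∃ w₁ w₂ : GV, 0 < hatDet J w₁ w₂}

/-- `C₋`: members of `C⁺(g)` whose induced structure on `g/[g,g]` is negatively oriented. -/
def CplusM : Set (Module.End ℝ GV) :=
  {J | J ∈ Cplus ∧ ∃ w₁ w₂ : GV, hatDet J w₁ w₂ < 0}

/-- `ℂ ⊗ g*`, identified with coordinate vectors with respect to the dual basis `e¹,…,e⁶`. -/
abbrev MC : Type := Fin 6 → ℂ

/-- Evaluation of a complexified 1-form on a vector of `g`. -/
def ev (α : MC) (v : GV) : ℂ := ∑ i, α i * v i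

/-- The dual basis `e¹,…,e⁶` inside `ℂ ⊗ g*`. -/
def eC (i : Fin 6) : MC := Pi.single i 1

def w1 : MC := eC 0 + Complex.I • eC 1
def w2 : MC := eC 2 + Complex.I • eC 3
def w3 : MC := eC 4 + Complex.I • eC 5
/-- `ω̄¹` -/
def w1b : MC := eC 0 - Complex.I • eC 1
/-- `ω̄²` -/
def w2b : MC := eC 2 - Complex.I • eC 3
/-- `ω̄³` -/
def w3b : MC := eC 4 - Complex.I • eC 5

/-- The space of `(1,0)`-forms of `J`, a complex subspace of `ℂ ⊗ g*`. -/
def holSub (J : Module.End ℝ GV) : Submodule ℂ MC where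
  carrier := {α | ∀ v : GV, ev α (J v) = Complex.I * ev α v}
  add_mem' := by
    intro a b ha hb v
    simp only [ev, Pi.add_apply, add_mul, Finset.sum_add_distrib] at *
    rw [ha v, hb v]; ring
  zero_mem' := by intro v; simp [ev]
  smul_mem' := by
    intro c α hα v
    simp only [ev, Pi.smul_apply, smul_eq_mul, mul_assoc, ← Finset.mul_sum] at *
    rw [hα v]; ring
/-- `(α₁, α₂, α₃)` is a basis of the space of `(1,0)`-forms of `J`. -/
def IsHolBasis (J : Module.End ℝ GV) (α₁ α₂ α₃ : MC) : Prop :=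
  LinearIndependent ℂ ![α₁, α₂, α₃] ∧ Submodule.span ℂ {α₁, α₂, α₃} = holSub J

/-- Inclusion into the exterior algebra of `ℂ ⊗ g*`; wedge products are multiplications there. -/
def ι : MC →ₗ[ℂ] ExteriorAlgebra ℂ MC := ExteriorAlgebra.ι ℂ

/-- The standard bi-invariant complex structure `J₀`. -/
def J0 : Module.End ℝ GV :=
  Matrix.mulVecLin !![0,-1,0,0,0,0; 1,0,0,0,0,0; 0,0,0,-1,0,0;
                      0,0,1,0,0,0; 0,0,0,0,0,-1; 0,0,0,0,1,0]

/-- The vector space underlying `V = span(E₁,E₂,E₃,E₄)`. -/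
abbrev W4 : Type := Fin 4 → ℝ

/-- Inclusion `V = span(E₁,…,E₄) ↪ g`. -/
def incl (w : W4) : GV := fun i => if h : (i : ℕ) < 4 then w ⟨i, h⟩ else 0

def det4W (v : Fin 4 → W4) : ℝ := (Matrix.of fun i j => v i j).det

/-- The topology on the space of `ℝ`-linear endomorphisms of `g`
(as a subspace of the space of all maps `g → g`). -/
instance : TopologicalSpace (Module.End ℝ GV) :=
  TopologicalSpace.induced (fun f => (f : GV → GV)) inferInstance

/-- The span of `E₁,E₂,E₃,E₄`. -/
def V4span : Submodule ℝ GV := Submodule.span ℝ {E 0, E 1, E 2, E 3}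

/-!
For `X = !![a, b; c, d]`, both `tr (X X̄) = |a|² + |d|² + 2 Re (b c̄)` and
`det (X X̄) = |det X|²` are real. When the trace is nonpositive, `|tr| ≤ 2 |b| |c| - |a|² - |d|² ≤ 2 (|b| |c| - |a| |d|) ≤ 2 |det X|`, so the
discriminant `tr² - 4 det = (λ - μ)²` of the characteristic polynomial is nonpositive.
-/

section

open ComplexConjugate Polynomial

lemma Complex.sq_le_four_mul_norm_sq_of_nonpos (a b c d : ℂ)
    (ht : ‖a‖ ^ 2 + ‖d‖ ^ 2 + 2 * (b * conj c).re ≤ 0) :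
    (‖a‖ ^ 2 + ‖d‖ ^ 2 + 2 * (b * conj c).re) ^ 2 ≤ 4 * ‖a * d - b * c‖ ^ 2 := by
  have hre : -(b * conj c).re ≤ ‖b‖ * ‖c‖ :=
    calc -(b * conj c).re ≤ |(b * conj c).re| := neg_le_abs _
      _ ≤ ‖b * conj c‖ := Complex.abs_re_le_norm _
      _ = ‖b‖ * ‖c‖ := by rw [norm_mul, Complex.norm_conj]
  have hdet : ‖b‖ * ‖c‖ - ‖a‖ * ‖d‖ ≤ ‖a * d - b * c‖ := by
    simpa [norm_mul] using (norm_sub_norm_le (b * c) (a * d)).trans_eq (norm_sub_rev _ _)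
  nlinarith [sq_nonneg (‖a‖ - ‖d‖), norm_nonneg (a * d - b * c)]

namespace Matrix

lemma trace_eq_add_and_det_eq_mul_of_charpoly_eq {R : Type*} [CommRing R] [Nontrivial R]
    {A : Matrix (Fin 2) (Fin 2) R} {l m : R} (h : A.charpoly = (X - C l) * (X - C m)) :
    A.trace = l + m ∧ A.det = l * m := by
  have hq : X ^ 2 - C A.trace * X + C A.det = X ^ 2 - C (l + m) * X + C (l * m) := by
    rw [← charpoly_fin_two, h, map_add, map_mul]; ring
  have h1 := congrArg (coeff · 1) hq
  have h0 := congrArg (coeff · 0) hq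
  simp only [coeff_add, coeff_sub, coeff_C_mul_X, coeff_X_pow, coeff_C] at h1 h0
  norm_num at h1 h0
  exact ⟨by linear_combination -h1, h0⟩

lemma det_mul_map_conj {n : Type*} [Fintype n] [DecidableEq n] (X : Matrix n n ℂ) :
    (X * X.map conj).det = ((‖X.det‖ ^ 2 : ℝ) : ℂ) := by
  rw [det_mul, ← RingHom.mapMatrix_apply, ← RingHom.map_det, Complex.mul_conj']
  push_cast; rfl

lemma trace_mul_map_conj_fin_two (X : Matrix (Fin 2) (Fin 2) ℂ) :
    (X * X.map conj).trace =
      ((‖X 0 0‖ ^ 2 + ‖X 1 1‖ ^ 2 + 2 * (X 0 1 * conj (X 1 0)).re : ℝ) : ℂ) := by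
  push_cast
  rw [← Complex.mul_conj', ← Complex.mul_conj', Complex.re_eq_add_conj]
  simp [trace_fin_two, mul_apply, Fin.sum_univ_two]
  ring

lemma sq_re_trace_mul_map_conj_le_four_mul_det (X : Matrix (Fin 2) (Fin 2) ℂ)
    (h : (X * X.map conj).trace.re ≤ 0) :
    (X * X.map conj).trace.re ^ 2 ≤ 4 * (X * X.map conj).det.re := by
  rw [trace_mul_map_conj_fin_two, Complex.ofReal_re] at h ⊢
  rw [det_mul_map_conj, Complex.ofReal_re, det_fin_two]
  exact Complex.sq_le_four_mul_norm_sq_of_nonpos _ _ _ _ h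

end Matrix

end

/-- if the characteristic polynomial of `X·X̄` has two real
non-positive roots, they coincide. -/
theorem stmt5 (X : Matrix (Fin 2) (Fin 2) ℂ) (l m : ℝ)
    (h : (X * X.map (starRingEnd ℂ)).charpoly =
      (Polynomial.X - Polynomial.C (l:ℂ)) * (Polynomial.X - Polynomial.C (m:ℂ)))
    (hl : l ≤ 0) (hm : m ≤ 0) : l = m := by
  obtain ⟨htr, hdet⟩ := Matrix.trace_eq_add_and_det_eq_mul_of_charpoly_eq h
  have hdiscr := X.sq_re_trace_mul_map_conj_le_four_mul_det
  rw [htr, hdet] at hdiscr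
  norm_cast at hdiscr
  nlinarith [hdiscr (by linarith), sq_nonneg (l - m)]

end
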